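/- arXiv:1504.02694 — 9 statements merged into one kernel-verified Lean document; each statement's English description precedes it below -/
import Mathlib

section
/- Let X be a type, L : Set (FreeMonoid X), and let e_L : FreeMonoid X →* Syn L denote the quotient homomorphism of FreeMonoid X by the syntactic congruence of L. Then (i) membership in L factors through e_L, i.e. there is f_L : Syn L → Prop with (w ∈ L ↔ f_L (e_L w)) for all w; and (ii) for every monoid M, every surjective monoid homomorphism e : FreeMonoid X →* M, and every f : M → Prop satisfying (w ∈ L ↔ f (e w)) for all w, there exists a unique monoid homomorphism h : M →* Syn L with h ∘ e = e_L; moreover f_L ∘ h = f. -/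
/-- The syntactic congruence of a language `L` over `X`. -/
def syntacticCon (X : Type*) (L : Set (FreeMonoid X)) : Con (FreeMonoid X) where
  r u v := ∀ x y : FreeMonoid X, x * u * y ∈ L ↔ x * v * y ∈ L
  iseqv :=
    ⟨fun _ _ _ => Iff.rfl, fun h x y => (h x y).symm, fun h1 h2 x y => (h1 x y).trans (h2 x y)⟩
  mul' := by
    intro a b c d hab hcd x y
    calc x * (a * c) * y ∈ L
        ↔ (x * a) * c * y ∈ L := by rw [show x * (a * c) * y = (x * a) * c * y by
          simp [mul_assoc]]
      _ ↔ (x * a) * d * y ∈ L := hcd (x * a) y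
      _ ↔ x * a * (d * y) ∈ L := by rw [mul_assoc]
      _ ↔ x * b * (d * y) ∈ L := hab x (d * y)
      _ ↔ x * (b * d) * y ∈ L := by rw [show x * (b * d) * y = x * b * (d * y) by
          simp [mul_assoc]]

/-! The kernel of any surjective `e` recognizing `L` is contained in the syntactic congruence, since
`e u = e v` forces `x * u * y ∈ L ↔ x * v * y ∈ L` through `f (e x * e u * e y)`. Hence `e_L`
factors through `e`, uniquely because `e` is surjective; `f_L` is membership in `L` read on
syntactic classes. -/

theorem MonoidHom.existsUnique_comp_eq_of_surjective {N M P : Type*} [Monoid N] [Monoid M]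
    [Monoid P] {e : N →* M} (he : Function.Surjective e) (g : N →* P)
    (hker : Con.ker e ≤ Con.ker g) : ∃! h : M →* P, h.comp e = g := by
  let q := Con.quotientKerEquivOfSurjective e he
  have hcomp : (((Con.ker e).lift g hker).comp q.symm.toMonoidHom).comp e = g := by
    ext w
    have hq : q.symm (e w) = (w : (Con.ker e).Quotient) := q.symm_apply_eq.mpr rfl
    simp [hq]
  exact ⟨_, hcomp, fun h hh => (MonoidHom.cancel_right he).mp (hh.trans hcomp.symm)⟩

section Syntactic

variable {X : Type*} (L : Set (FreeMonoid X))

theorem mem_iff_of_syntacticCon {u v : FreeMonoid X} (h : syntacticCon X L u v) :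
    u ∈ L ↔ v ∈ L := by
  simpa using h 1 1

def syntacticAccepts : (syntacticCon X L).Quotient → Prop :=
  Quotient.lift (· ∈ L) fun _ _ h => propext (mem_iff_of_syntacticCon L h)

theorem syntacticAccepts_mk' (w : FreeMonoid X) :
    syntacticAccepts L ((syntacticCon X L).mk' w) ↔ w ∈ L :=
  Iff.rfl

theorem ker_le_syntacticCon {M : Type*} [Monoid M] (e : FreeMonoid X →* M) (f : M → Prop)
    (hf : ∀ w, w ∈ L ↔ f (e w)) : Con.ker e ≤ syntacticCon X L := by
  intro u v huv x y
  rw [hf, hf, map_mul, map_mul, map_mul, map_mul, (Con.ker_rel e).mp huv]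

end Syntactic

/-- universal property of the syntactic monoid
`Syn L = (syntacticCon X L).Quotient` with quotient homomorphism
`e_L = (syntacticCon X L).mk'`: membership in `L` factors through `e_L` via some
`f_L : Syn L → Prop`, and for every monoid `M`, every surjective monoid homomorphism
`e : FreeMonoid X →* M` and every `f : M → Prop` recognizing `L` (i.e. `w ∈ L ↔ f (e w)`),
there is a unique monoid homomorphism `h : M →* Syn L` with `h ∘ e = e_L`;
moreover `f_L ∘ h = f`. -/
theorem syntacticMonoid_universal {X : Type*} (L : Set (FreeMonoid X)) :
    ∃ fL : (syntacticCon X L).Quotient → Prop,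
      (∀ w : FreeMonoid X, w ∈ L ↔ fL ((syntacticCon X L).mk' w)) ∧
      ∀ (M : Type*) [Monoid M] (e : FreeMonoid X →* M), Function.Surjective e →
        ∀ f : M → Prop, (∀ w : FreeMonoid X, w ∈ L ↔ f (e w)) →
          (∃! h : M →* (syntacticCon X L).Quotient,
              h.comp e = (syntacticCon X L).mk') ∧
          ∀ h : M →* (syntacticCon X L).Quotient,
            h.comp e = (syntacticCon X L).mk' → fL ∘ ⇑h = f := by
  refine ⟨syntacticAccepts L, fun w => (syntacticAccepts_mk' L w).symm,
    fun M _ e he f hf => ⟨?_, fun h hh => ?_⟩⟩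
  · apply MonoidHom.existsUnique_comp_eq_of_surjective he
    rw [Con.mk'_ker]
    exact ker_le_syntacticCon L e f hf
  · refine he.injective_comp_right (funext fun w => propext ?_)
    simp only [Function.comp_apply, ← MonoidHom.comp_apply, hh, syntacticAccepts_mk', hf]
end

section
/- Let X be a type and L : Set (FreeMonoid X). Let Q_L ⊆ Set (FreeMonoid X) be the set of left quotients of L, Q_L = { u⁻¹L | u : FreeMonoid X } where u⁻¹L = { w | u * w ∈ L }, and let φ : FreeMonoid X →* Function.End Q_L be the monoid homomorphism sending w to the map K ↦ w⁻¹K (each left quotient of L is sent to another left quotient, and φ reverses/respects composition appropriately so as to be a monoid homomorphism). Then the syntactic monoid of L (the quotient of FreeMonoid X by the syntactic congruence) is isomorphic as a monoid to the range of φ, i.e. to the transition monoid of the minimal automaton of L. -/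
/-- The set of left quotients (derivatives) of a language `L`, the state set of the
minimal automaton of `L`. -/
abbrev leftQuotients {X : Type*} (L : Set (FreeMonoid X)) : Type _ :=
  {K : Set (FreeMonoid X) // ∃ u : FreeMonoid X, K = {w | u * w ∈ L}}

section LeftQuotient

variable {M : Type*} [Monoid M]

def leftQuotient (u : M) (K : Set M) : Set M := {w | u * w ∈ K}

@[simp]
theorem mem_leftQuotient {u w : M} {K : Set M} : w ∈ leftQuotient u K ↔ u * w ∈ K := Iff.rfl

@[simp]
theorem leftQuotient_one (K : Set M) : leftQuotient 1 K = K := by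
  ext; simp

theorem leftQuotient_mul (u v : M) (K : Set M) :
    leftQuotient (u * v) K = leftQuotient v (leftQuotient u K) := by
  ext; simp [mul_assoc]

end LeftQuotient

section TransitionMonoid

variable {X : Type*} (L : Set (FreeMonoid X))

def transitionMap (w : FreeMonoid X) : Function.End (leftQuotients L) := fun K =>
  ⟨leftQuotient w K.val, by
    obtain ⟨u, hu⟩ := K.property
    exact ⟨u * w, by rw [hu]; exact (leftQuotient_mul u w L).symm⟩⟩

def transitionHom : FreeMonoid X →* (Function.End (leftQuotients L))ᵐᵒᵖ where
  toFun w := .op (transitionMap L w)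
  map_one' := congrArg _ <| funext fun K => Subtype.ext (leftQuotient_one K.val)
  map_mul' u v := congrArg _ <| funext fun K => Subtype.ext (leftQuotient_mul u v K.val)

@[simp]
theorem coe_transitionMap (w : FreeMonoid X) (K : leftQuotients L) :
    (transitionMap L w K : Set (FreeMonoid X)) = leftQuotient w K := rfl

theorem transitionMap_eq_iff {u v : FreeMonoid X} :
    transitionMap L u = transitionMap L v ↔
      ∀ x, leftQuotient (x * u) L = leftQuotient (x * v) L := by
  constructor
  · intro h x
    have := congrArg Subtype.val (congrFun h ⟨leftQuotient x L, x, rfl⟩)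
    rwa [coe_transitionMap, coe_transitionMap, ← leftQuotient_mul, ← leftQuotient_mul] at this
  · intro h
    funext ⟨K, x, hK⟩
    apply Subtype.ext
    subst hK
    exact (leftQuotient_mul x u L).symm.trans ((h x).trans (leftQuotient_mul x v L))

theorem transitionHom_apply (w : FreeMonoid X) :
    transitionHom L w = .op (transitionMap L w) := rfl

theorem syntacticCon_iff {u v : FreeMonoid X} :
    syntacticCon X L u v ↔ ∀ x, leftQuotient (x * u) L = leftQuotient (x * v) L := by
  show (∀ x y, x * u * y ∈ L ↔ x * v * y ∈ L) ↔ _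
  simp only [Set.ext_iff, mem_leftQuotient, mul_assoc]

theorem syntacticCon_eq_ker_transitionHom : syntacticCon X L = Con.ker (transitionHom L) := by
  ext u v
  rw [Con.ker_rel, transitionHom_apply, transitionHom_apply, MulOpposite.op_inj,
    transitionMap_eq_iff, syntacticCon_iff]

end TransitionMonoid

/-- the syntactic monoid of `L` (the quotient of `FreeMonoid X` by the
syntactic congruence) is isomorphic to the transition monoid of the minimal automaton
of `L`: the range of the monoid homomorphism `φ` sending a word `w` to the transition
map `K ↦ w⁻¹K` on the left quotients of `L` (valued in the opposite of `Function.End`,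
which is the composition order making `φ` a monoid homomorphism). -/
theorem syntacticMonoid_iso_transitionMonoid {X : Type*} (L : Set (FreeMonoid X)) :
    ∃ φ : FreeMonoid X →* (Function.End (leftQuotients L))ᵐᵒᵖ,
      (∀ (w : FreeMonoid X) (K : leftQuotients L),
        ((φ w).unop K).val = {w' : FreeMonoid X | w * w' ∈ K.val}) ∧
      Nonempty ((syntacticCon X L).Quotient ≃* MonoidHom.mrange φ) := by
  refine ⟨transitionHom L, fun _ _ => rfl, ?_⟩
  rw [syntacticCon_eq_ker_transitionHom]
  exact ⟨Con.quotientKerEquivRange (transitionHom L)⟩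
end

section
/- Let X be a type and L : Language X (equivalently L : Set (FreeMonoid X)). Then L is a regular language (accepted by a deterministic finite automaton with finitely many states) if and only if the syntactic monoid of L, i.e. the quotient of FreeMonoid X by the syntactic congruence of L, is a finite type. -/
theorem Setoid.finite_quotient_of_ker_le {α β : Type*} [Finite β] {r : Setoid α} (f : α → β)
    (h : Setoid.ker f ≤ r) : Finite (Quotient r) :=
  have : Finite (Quotient (Setoid.ker f)) := .of_equiv _ (Setoid.quotientKerEquivRange f).symm
  .of_surjective (Quotient.map' id h) (Quotient.ind fun a => ⟨⟦a⟧, rfl⟩)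

namespace Language

variable {X : Type*}

theorem syntacticCon_accepts_of_evalFrom_eq {σ : Type*} (M : DFA X σ) {u v : FreeMonoid X}
    (h : (M.evalFrom · u.toList) = (M.evalFrom · v.toList)) :
    syntacticCon X {w | w.toList ∈ M.accepts} u v := by
  intro x y
  simp only [Set.mem_ofPred_eq, FreeMonoid.toList_mul, DFA.mem_accepts, DFA.eval,
    DFA.evalFrom_of_append, congrFun h]

theorem IsRegular.finite_syntacticCon_quotient {L : Language X} (hL : L.IsRegular) :
    Finite (syntacticCon X {w | w.toList ∈ L}).Quotient := by
  obtain ⟨σ, _, M, rfl⟩ := hL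
  exact Setoid.finite_quotient_of_ker_le (fun w : FreeMonoid X => (M.evalFrom · w.toList))
    fun _ _ => syntacticCon_accepts_of_evalFrom_eq M

theorem leftQuotient_eq_of_syntacticCon {L : Language X} {u v : FreeMonoid X}
    (h : syntacticCon X {w | w.toList ∈ L} u v) :
    L.leftQuotient u.toList = L.leftQuotient v.toList :=
  Language.ext fun y => by simpa using h 1 (FreeMonoid.ofList y)

theorem IsRegular.of_finite_syntacticCon_quotient {L : Language X}
    (h : Finite (syntacticCon X {w | w.toList ∈ L}).Quotient) : L.IsRegular := by
  refine .of_finite_range_leftQuotient <| (Set.finite_range fun q : (syntacticCon X _).Quotient =>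
    q.liftOn (L.leftQuotient ·.toList) fun _ _ => leftQuotient_eq_of_syntacticCon).subset ?_
  rintro _ ⟨x, rfl⟩
  exact ⟨(FreeMonoid.ofList x : FreeMonoid X), rfl⟩

end Language

/-- a language `L` is regular (accepted by a DFA with finitely many states)
iff its syntactic monoid (the quotient of `FreeMonoid X` by the syntactic congruence of
`L`) is finite. -/
theorem isRegular_iff_finite_syntacticMonoid {X : Type} (L : Language X) :
    L.IsRegular ↔
      Finite (syntacticCon X {w : FreeMonoid X | FreeMonoid.toList w ∈ L}).Quotient :=
  ⟨Language.IsRegular.finite_syntacticCon_quotient, .of_finite_syntacticCon_quotient⟩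
end

section
/- Let X be a type and L : Language X (equivalently L : Set (FreeMonoid X)). Then L is a regular language if and only if L is recognized by a finite monoid, i.e., there exist a finite monoid M, a monoid homomorphism e : FreeMonoid X →* M, and a subset F ⊆ M such that L = e⁻¹(F). -/
/-!
A DFA with state set `σ` induces a homomorphism from the free monoid to the finite monoid of
transformations of `σ`, sending a word to the state map it induces; acceptance only depends on
the image of the start state, so the language is a preimage. Conversely, a homomorphism
`e : FreeMonoid X →* M` into a finite monoid is run as a DFA on the states `M`, reading letter `a`
as right multiplication by `e a`, so that a word `w` leads from `1` to `e w`.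
-/

namespace DFA

variable {α σ : Type*}

/-- Words act on states on the right, hence the opposite monoid of `Function.End σ`. -/
def transitionHom (A : DFA α σ) : FreeMonoid α →* (Function.End σ)ᵐᵒᵖ :=
  FreeMonoid.lift fun a => .op fun s => A.step s a

theorem unop_transitionHom_apply (A : DFA α σ) (w : FreeMonoid α) (s : σ) :
    (A.transitionHom w).unop s = A.evalFrom s w.toList := by
  induction w using FreeMonoid.recOn generalizing s with
  | one => rfl
  | of_mul a w ih =>
    rw [map_mul, MulOpposite.unop_mul, FreeMonoid.toList_of_mul, evalFrom_cons, ← ih]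
    rfl

theorem preimage_toList_accepts (A : DFA α σ) :
    FreeMonoid.toList ⁻¹' A.accepts = A.transitionHom ⁻¹' {f | f.unop A.start ∈ A.accept} := by
  ext w
  rw [Set.mem_preimage, Set.mem_ofPred_eq, unop_transitionHom_apply]
  rfl

variable {M : Type*} [Monoid M]

def ofMonoidHom (e : FreeMonoid α →* M) (F : Set M) : DFA α M where
  step m a := m * e (.of a)
  start := 1
  accept := F

theorem evalFrom_ofMonoidHom (e : FreeMonoid α →* M) (F : Set M) (m : M) (l : List α) :
    (ofMonoidHom e F).evalFrom m l = m * e (.ofList l) := by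
  induction l generalizing m with
  | nil => simp
  | cons a l ih =>
    rw [evalFrom_cons, ih, FreeMonoid.ofList_cons, map_mul, ← mul_assoc]
    rfl

theorem mem_accepts_ofMonoidHom (e : FreeMonoid α →* M) (F : Set M) (l : List α) :
    l ∈ (ofMonoidHom e F).accepts ↔ e (.ofList l) ∈ F := by
  show (ofMonoidHom e F).evalFrom 1 l ∈ F ↔ _
  rw [evalFrom_ofMonoidHom, one_mul]

end DFA

/-- a language `L` is regular iff it is recognized by a finite monoid,
i.e. there are a finite monoid `M`, a monoid homomorphism `e : FreeMonoid X →* M` and a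
subset `F ⊆ M` with `L = e⁻¹(F)`. -/
theorem isRegular_iff_recognized_by_finite_monoid {X : Type} (L : Language X) :
    L.IsRegular ↔
      ∃ (M : Type) (_ : Monoid M) (_ : Finite M) (e : FreeMonoid X →* M) (F : Set M),
        {w : FreeMonoid X | FreeMonoid.toList w ∈ L} = e ⁻¹' F := by
  constructor
  · rintro ⟨σ, _, A, rfl⟩
    exact ⟨(Function.End σ)ᵐᵒᵖ, inferInstance, Finite.of_equiv (σ → σ) MulOpposite.opEquiv,
      A.transitionHom, _, A.preimage_toList_accepts⟩
  · rintro ⟨M, _, _, e, F, hF⟩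
    refine ⟨M, Fintype.ofFinite M, DFA.ofMonoidHom e F, Language.ext fun l => ?_⟩
    rw [DFA.mem_accepts_ofMonoidHom, ← Set.mem_preimage, ← hF]
    rfl
end

section
/- Let X be a type and L : Set (FreeMonoid X). Suppose M₁ and M₂ are deterministic automata over X (with state types Q₁, Q₂, initial states s₁, s₂, transitions step₁, step₂, accepting sets F₁, F₂) both accepting L, both reachable (every state is evalFrom sᵢ w for some word w) and both simple (the map sending a state q to the language { w | evalFrom q w is accepting } is injective). Then M₁ and M₂ are isomorphic: there is a bijection h : Q₁ → Q₂ with h(s₁) = s₂, h(step₁ q a) = step₂ (h q) a for all q and a, and q ∈ F₁ ↔ h q ∈ F₂. -/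
/-!
In a simple DFA a state is determined by the language accepted from it, and in a reachable DFA
these languages are exactly the left quotients `x⁻¹L` of the accepted language `L`. Hence both
state sets are in bijection with the set of left quotients of `L`. The bijection respects
transitions because the language of `step q a` is `a⁻¹` times the language of `q`, and
acceptance because `q` is accepting iff its language contains `[]`.
-/

open Function

theorem Function.Injective.exists_equiv_apply_eq_of_range_eq {α β γ : Type*} {f : α → γ}
    {g : β → γ} (hf : Injective f) (hg : Injective g) (hfg : Set.range f = Set.range g) :
    ∃ e : α ≃ β, ∀ a, g (e a) = f a :=
  ⟨(Equiv.ofInjective f hf).trans ((Equiv.setCongr hfg).trans (Equiv.ofInjective g hg).symm),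
    fun _ => Equiv.apply_ofInjective_symm hg _⟩

namespace DFA

variable {α σ σ₁ σ₂ : Type*}

theorem acceptsFrom_step (M : DFA α σ) (q : σ) (a : α) :
    M.acceptsFrom (M.step q a) = (M.acceptsFrom q).leftQuotient [a] :=
  rfl

theorem nil_mem_acceptsFrom (M : DFA α σ) (q : σ) : [] ∈ M.acceptsFrom q ↔ q ∈ M.accept :=
  Iff.rfl

theorem range_acceptsFrom_of_surjective_eval (M : DFA α σ) (hM : Surjective M.eval) :
    Set.range M.acceptsFrom = Set.range M.accepts.leftQuotient := by
  rw [Language.leftQuotient_accepts, Set.range_comp, hM.range_eq, Set.image_univ]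

theorem exists_equiv_of_accepts_eq (M₁ : DFA α σ₁) (M₂ : DFA α σ₂)
    (hacc : M₁.accepts = M₂.accepts) (hreach₁ : Surjective M₁.eval)
    (hreach₂ : Surjective M₂.eval) (hsimple₁ : Injective M₁.acceptsFrom)
    (hsimple₂ : Injective M₂.acceptsFrom) :
    ∃ e : σ₁ ≃ σ₂, e M₁.start = M₂.start ∧ (∀ q a, e (M₁.step q a) = M₂.step (e q) a) ∧
      ∀ q, q ∈ M₁.accept ↔ e q ∈ M₂.accept := by
  have hrange : Set.range M₁.acceptsFrom = Set.range M₂.acceptsFrom := by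
    rw [range_acceptsFrom_of_surjective_eval M₁ hreach₁,
      range_acceptsFrom_of_surjective_eval M₂ hreach₂, hacc]
  obtain ⟨e, he⟩ := hsimple₁.exists_equiv_apply_eq_of_range_eq hsimple₂ hrange
  refine ⟨e, hsimple₂ ?_, fun q a => hsimple₂ ?_, fun q => ?_⟩
  · exact (he _).trans hacc
  · rw [he, acceptsFrom_step, acceptsFrom_step, he]
  · rw [← nil_mem_acceptsFrom, ← nil_mem_acceptsFrom, he]

end DFA

/-- any two reachable and simple deterministic automata accepting the same
language `L` are isomorphic: there is a bijection between the state sets preserving the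
initial state, the transitions and acceptance. -/
theorem minimalAutomaton_unique {X Q₁ Q₂ : Type*} (L : Set (FreeMonoid X))
    (M₁ : DFA X Q₁) (M₂ : DFA X Q₂)
    (hacc₁ : ∀ w : FreeMonoid X,
      M₁.evalFrom M₁.start (FreeMonoid.toList w) ∈ M₁.accept ↔ w ∈ L)
    (hacc₂ : ∀ w : FreeMonoid X,
      M₂.evalFrom M₂.start (FreeMonoid.toList w) ∈ M₂.accept ↔ w ∈ L)
    (hreach₁ : ∀ q : Q₁, ∃ w : FreeMonoid X, q = M₁.evalFrom M₁.start (FreeMonoid.toList w))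
    (hreach₂ : ∀ q : Q₂, ∃ w : FreeMonoid X, q = M₂.evalFrom M₂.start (FreeMonoid.toList w))
    (hsimple₁ : Function.Injective fun q : Q₁ =>
      {w : FreeMonoid X | M₁.evalFrom q (FreeMonoid.toList w) ∈ M₁.accept})
    (hsimple₂ : Function.Injective fun q : Q₂ =>
      {w : FreeMonoid X | M₂.evalFrom q (FreeMonoid.toList w) ∈ M₂.accept}) :
    ∃ h : Q₁ ≃ Q₂,
      h M₁.start = M₂.start ∧
      (∀ (q : Q₁) (a : X), h (M₁.step q a) = M₂.step (h q) a) ∧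
      (∀ q : Q₁, q ∈ M₁.accept ↔ h q ∈ M₂.accept) := by
  have hacc : M₁.accepts = M₂.accepts := by
    ext x
    exact (hacc₁ (FreeMonoid.ofList x)).trans (hacc₂ (FreeMonoid.ofList x)).symm
  exact DFA.exists_equiv_of_accepts_eq M₁ M₂ hacc
    (fun q => (hreach₁ q).imp fun _ => Eq.symm) (fun q => (hreach₂ q).imp fun _ => Eq.symm)
    (hsimple₁.of_comp (f := (FreeMonoid.toList ⁻¹' ·)))
    (hsimple₂.of_comp (f := (FreeMonoid.toList ⁻¹' ·)))
end

section
/- Let K be a field (commutative semiring suffices), X a type, and L : MonoidAlgebra K (FreeMonoid X) →ₗ[K] K. The syntactic ideal I_L = { V | ∀ x y : FreeMonoid X, L (single x 1 * V * single y 1) = 0 } is the largest two-sided ideal of MonoidAlgebra K (FreeMonoid X) contained in the kernel of L: I_L ⊆ ker L, and every two-sided ideal J of MonoidAlgebra K (FreeMonoid X) with J ⊆ ker L satisfies J ⊆ I_L. -/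
/-- the syntactic ideal
`I_L = {V | ∀ x y, L (single x 1 * V * single y 1) = 0}` of a `K`-weighted language `L`
is the largest two-sided ideal contained in the kernel of `L`: it is contained in
`ker L = {V | L V = 0}`, and every two-sided ideal `J` contained in `ker L` is contained
in `I_L`. -/
theorem syntacticIdeal_largest (K : Type*) [Field K] (X : Type*)
    (L : MonoidAlgebra K (FreeMonoid X) →ₗ[K] K) :
    {V : MonoidAlgebra K (FreeMonoid X) | ∀ x y : FreeMonoid X,
        L (MonoidAlgebra.single x 1 * V * MonoidAlgebra.single y 1) = 0} ⊆
      {V : MonoidAlgebra K (FreeMonoid X) | L V = 0} ∧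
    ∀ J : TwoSidedIdeal (MonoidAlgebra K (FreeMonoid X)),
      (J : Set (MonoidAlgebra K (FreeMonoid X))) ⊆
          {V : MonoidAlgebra K (FreeMonoid X) | L V = 0} →
        (J : Set (MonoidAlgebra K (FreeMonoid X))) ⊆
          {V : MonoidAlgebra K (FreeMonoid X) | ∀ x y : FreeMonoid X,
            L (MonoidAlgebra.single x 1 * V * MonoidAlgebra.single y 1) = 0} := by
  refine ⟨fun V hV => ?_, fun J hJ V hV x y => hJ (J.mul_mem_right _ _ (J.mul_mem_left _ _ hV))⟩
  simpa only [← MonoidAlgebra.one_def, one_mul, mul_one, Set.mem_ofPred_eq] using hV 1 1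
end

section
/- Let K be a field, X a type, L : MonoidAlgebra K (FreeMonoid X) →ₗ[K] K, and let π : MonoidAlgebra K (FreeMonoid X) → Syn L be the quotient K-algebra homomorphism by the syntactic ideal I_L of L. Then (i) L factors through π: there is a K-linear map f_L : Syn L →ₗ[K] K with L = f_L ∘ π; and (ii) for every K-algebra A, every surjective K-algebra homomorphism e : MonoidAlgebra K (FreeMonoid X) →ₐ[K] A and every K-linear map f : A →ₗ[K] K with L = f ∘ e, there exists a unique K-algebra homomorphism h : A →ₐ[K] Syn L with h ∘ e = π; moreover f_L ∘ h = f. -/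
/-!
Taking `x = y = 1` in the definition of the syntactic ideal shows that `L` vanishes on `ker π`,
so `L` descends along the surjection `π`. Conversely, if `L = f ∘ e` then
`L (a * V * b) = f (e a * e V * e b)` vanishes whenever `e V = 0`, so `ker e ⊆ I_L = ker π` and
`π` descends along the surjection `e`; uniqueness is surjectivity of `e`.
-/

theorem LinearMap.exists_factor_of_surjective_of_ker_le {R M N P : Type*} [Ring R]
    [AddCommGroup M] [AddCommGroup N] [AddCommGroup P] [Module R M] [Module R N] [Module R P]
    (g : M →ₗ[R] N) (hg : Function.Surjective g) (f : M →ₗ[R] P) (hker : ker g ≤ ker f) :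
    ∃ f' : N →ₗ[R] P, ∀ x, f' (g x) = f x :=
  ⟨(ker g).liftQ f hker ∘ₗ (g.quotKerEquivOfSurjective hg).symm.toLinearMap, by simp⟩

theorem AlgHom.existsUnique_factor_of_surjective_of_ker_le {R A B C : Type*} [CommSemiring R]
    [Ring A] [Ring B] [Semiring C] [Algebra R A] [Algebra R B] [Algebra R C]
    (g : A →ₐ[R] B) (hg : Function.Surjective g) (f : A →ₐ[R] C)
    (hker : RingHom.ker g ≤ RingHom.ker f) :
    ∃! f' : B →ₐ[R] C, ∀ a, f' (g a) = f a := by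
  let f' := (Ideal.Quotient.liftₐ (RingHom.ker g) f hker).comp
    (Ideal.quotientKerAlgEquivOfSurjective hg).symm.toAlgHom
  have hf' : ∀ a, f' (g a) = f a := fun a ↦ by
    simp only [f', AlgHom.comp_apply, AlgEquiv.coe_toAlgHom,
      Ideal.quotientKerAlgEquivOfSurjective_symm_apply]
    exact Ideal.Quotient.lift_mk _ _ _
  refine ⟨f', hf', fun f'' hf'' ↦ (AlgHom.cancel_right hg).1 (AlgHom.ext fun a ↦ ?_)⟩
  simp [hf', hf'']

theorem MonoidAlgebra.apply_eq_zero_of_forall_single_mul_mul_single {K M N : Type*}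
    [CommSemiring K] [Monoid M] [AddCommMonoid N] [Module K N]
    (L : MonoidAlgebra K M →ₗ[K] N) {V : MonoidAlgebra K M}
    (hV : ∀ x y : M, L (single x 1 * V * single y 1) = 0) : L V = 0 := by
  simpa [← one_def] using hV 1 1

theorem apply_mul_mul_eq_zero_of_map_eq_zero {A B P F G : Type*} [Semiring A] [Semiring B]
    [AddCommMonoid P] [FunLike F A B] [MulHomClass F A B]
    [FunLike G B P] [ZeroHomClass G B P]
    {e : F} {f : G} {L : A → P} (hL : ∀ V, L V = f (e V)) {V : A} (hV : e V = 0) (a b : A) :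
    L (a * V * b) = 0 := by
  rw [hL, map_mul e, map_mul e, hV, mul_zero, zero_mul, map_zero]

/-- universal property of the syntactic `K`-algebra. Let
`π : MonoidAlgebra K (FreeMonoid X) →ₐ[K] S` be the quotient by the syntactic ideal
`I_L` of a `K`-weighted language `L` (i.e. `π` is a surjective `K`-algebra homomorphism
with `π V = 0 ↔ V ∈ I_L`). Then (i) `L` factors through `π` via a linear
`f_L : S →ₗ[K] K`, and (ii) for every `K`-algebra `A`, every surjective `K`-algebra
homomorphism `e` and every linear `f : A →ₗ[K] K` with `L = f ∘ e`, there is a unique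
`K`-algebra homomorphism `h : A →ₐ[K] S` with `h ∘ e = π`; moreover `f_L ∘ h = f`. -/
theorem syntacticAlgebra_universal (K : Type) [Field K] (X : Type)
    (L : MonoidAlgebra K (FreeMonoid X) →ₗ[K] K)
    (S : Type) [Ring S] [Algebra K S]
    (π : MonoidAlgebra K (FreeMonoid X) →ₐ[K] S)
    (hsurj : Function.Surjective π)
    (hker : ∀ V : MonoidAlgebra K (FreeMonoid X),
      π V = 0 ↔ ∀ x y : FreeMonoid X,
        L (MonoidAlgebra.single x 1 * V * MonoidAlgebra.single y 1) = 0) :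
    ∃ fL : S →ₗ[K] K,
      (∀ V : MonoidAlgebra K (FreeMonoid X), L V = fL (π V)) ∧
      ∀ (A : Type) [Ring A] [Algebra K A]
        (e : MonoidAlgebra K (FreeMonoid X) →ₐ[K] A),
        Function.Surjective e →
        ∀ f : A →ₗ[K] K, (∀ V : MonoidAlgebra K (FreeMonoid X), L V = f (e V)) →
          (∃! h : A →ₐ[K] S, ∀ V : MonoidAlgebra K (FreeMonoid X), h (e V) = π V) ∧
          ∀ h : A →ₐ[K] S,
            (∀ V : MonoidAlgebra K (FreeMonoid X), h (e V) = π V) →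
            ∀ a : A, fL (h a) = f a := by
  obtain ⟨fL, hfL⟩ := LinearMap.exists_factor_of_surjective_of_ker_le π.toLinearMap hsurj L
    fun V hV ↦ MonoidAlgebra.apply_eq_zero_of_forall_single_mul_mul_single L ((hker V).1 hV)
  refine ⟨fL, fun V ↦ (hfL V).symm, fun A _ _ e he f hf ↦ ⟨?_, ?_⟩⟩
  · exact AlgHom.existsUnique_factor_of_surjective_of_ker_le e he π fun V hV ↦
      (hker V).2 fun x y ↦ apply_mul_mul_eq_zero_of_map_eq_zero hf hV _ _
  · intro h hh a
    obtain ⟨V, rfl⟩ := he a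
    rw [hh, ← hf]
    exact hfL V
end

section
/- Let K be a field, X a type, and L : MonoidAlgebra K (FreeMonoid X) →ₗ[K] K. Then the following are equivalent: (i) there exist a K-algebra A that is finite-dimensional as a K-vector space, a surjective K-algebra homomorphism e : MonoidAlgebra K (FreeMonoid X) →ₐ[K] A and a K-linear map f : A →ₗ[K] K with L = f ∘ e; (ii) the syntactic K-algebra Syn L = MonoidAlgebra K (FreeMonoid X) / I_L is finite-dimensional as a K-vector space. -/
/-!
A linear map descends along a surjection `e` exactly when it vanishes on `ker e`. If `L = f ∘ e`
with `e` an algebra homomorphism, then `ker e` is an ideal on which `L` vanishes, so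
`ker e ⊆ I_L` and `Syn L` is a quotient of the finite-dimensional algebra `A`. Conversely
`I_L ⊆ ker L` (take `x = y = 1`), so `L` factors through `Syn L`, which then recognizes `L`.
-/

namespace LinearMap

variable {R M N P : Type*} [Ring R] [AddCommGroup M] [AddCommGroup N] [AddCommGroup P]
  [Module R M] [Module R N] [Module R P]

theorem exists_comp_eq_of_surjective_of_ker_le (e : M →ₗ[R] N) (he : Function.Surjective e)
    (g : M →ₗ[R] P) (hker : ker e ≤ ker g) : ∃ h : N →ₗ[R] P, h ∘ₗ e = g := by
  refine ⟨(ker e).liftQ g hker ∘ₗ (e.quotKerEquivOfSurjective he).symm.toLinearMap, ?_⟩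
  ext V
  have hsymm : (e.quotKerEquivOfSurjective he).symm (e V) = Submodule.Quotient.mk V :=
    (LinearEquiv.symm_apply_eq _).2 rfl
  simp only [comp_apply, LinearEquiv.coe_toLinearMap, hsymm, Submodule.liftQ_apply]

theorem _root_.Module.Finite.of_surjective_of_ker_le [Module.Finite R N] (e : M →ₗ[R] N)
    (he : Function.Surjective e) (g : M →ₗ[R] P) (hg : Function.Surjective g)
    (hker : ker e ≤ ker g) : Module.Finite R P := by
  obtain ⟨h, rfl⟩ := exists_comp_eq_of_surjective_of_ker_le e he g hker
  exact Module.Finite.of_surjective h (Function.Surjective.of_comp hg)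

end LinearMap

/-- a `K`-weighted language `L` is recognized by a finite-dimensional
`K`-algebra (via a surjective `K`-algebra homomorphism `e` and a linear functional `f`
with `L = f ∘ e`) iff its syntactic `K`-algebra — the quotient `S` of
`MonoidAlgebra K (FreeMonoid X)` by the syntactic ideal `I_L`, given here as a
surjective algebra homomorphism `π` with kernel `I_L` — is finite-dimensional over `K`. -/
theorem recognizable_iff_syntacticAlgebra_finiteDimensional (K : Type) [Field K] (X : Type)
    (L : MonoidAlgebra K (FreeMonoid X) →ₗ[K] K)
    (S : Type) [Ring S] [Algebra K S]
    (π : MonoidAlgebra K (FreeMonoid X) →ₐ[K] S)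
    (hsurj : Function.Surjective π)
    (hker : ∀ V : MonoidAlgebra K (FreeMonoid X),
      π V = 0 ↔ ∀ x y : FreeMonoid X,
        L (MonoidAlgebra.single x 1 * V * MonoidAlgebra.single y 1) = 0) :
    (∃ (A : Type) (_ : Ring A) (_ : Algebra K A)
        (e : MonoidAlgebra K (FreeMonoid X) →ₐ[K] A) (f : A →ₗ[K] K),
        FiniteDimensional K A ∧ Function.Surjective e ∧
          ∀ V : MonoidAlgebra K (FreeMonoid X), L V = f (e V)) ↔
      FiniteDimensional K S := by
  constructor
  · rintro ⟨A, _, _, e, f, hA, he, hL⟩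
    refine Module.Finite.of_surjective_of_ker_le e.toLinearMap he π.toLinearMap hsurj
      fun V (hV : e V = 0) => (hker V).2 fun x y => ?_
    rw [hL, map_mul e, map_mul e, hV, mul_zero, zero_mul, map_zero]
  · intro hS
    have hker_le : LinearMap.ker π.toLinearMap ≤ LinearMap.ker L := fun V hV => by
      simpa [← MonoidAlgebra.one_def] using (hker V).1 hV 1 1
    obtain ⟨f, hf⟩ :=
      LinearMap.exists_comp_eq_of_surjective_of_ker_le π.toLinearMap hsurj L hker_le
    exact ⟨S, _, _, π, f, hS, hsurj, fun V => (LinearMap.congr_fun hf V).symm⟩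
end

section
/- Let C be a symmetric monoidal closed category with all coequalizers and countable coproducts. Then the forgetful functor from the category Mon_ C of monoid objects in C to C preserves reflexive coequalizers: whenever f, g : M ⟶ N is a reflexive pair of morphisms in Mon_ C (i.e., f and g admit a common section) and c : N ⟶ Q is a coequalizer of f and g in Mon_ C, the image of c under the forgetful functor is a coequalizer of the images of f and g in C. -/
/-!
Tensoring on either side preserves coequalizers, so `p ▷ B` and `Q ◁ p` are coequalizers
whenever `p : B ⟶ Q` coequalizes `f g : A ⟶ B`. If the pair has a common section `s`, then
`f ▷ B = A ◁ s ≫ (f ⊗ f)` and `B ◁ f = s ▷ A ≫ (f ⊗ f)`, so a map coequalizing `f ⊗ f` and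
`g ⊗ g` descends first along `p ▷ B` and then along `Q ◁ p`: the tensor square `p ⊗ p` is a
coequalizer of `f ⊗ f` and `g ⊗ g`. For a reflexive pair of monoid morphisms the multiplication
of `N` therefore descends to the coequalizer `Q` of the underlying pair, making `Q` a monoid and
`p` a monoid morphism; `p` is then also the coequalizer in `Mon C`, because `p ⊗ p` is epi, so a
morphism out of `Q` whose composite with `p` is a monoid morphism is itself one.
-/

open CategoryTheory CategoryTheory.Limits MonoidalCategory MonObj

namespace CategoryTheory.Limits

variable {C : Type*} [Category C] [MonoidalCategory C] {A B Q : C} {f g : A ⟶ B}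

lemma IsReflexivePair.whiskerRight_comp_eq_of_tensorHom_comp_eq [IsReflexivePair f g] {Z : C}
    {t : B ⊗ B ⟶ Z} (ht : (f ⊗ₘ f) ≫ t = (g ⊗ₘ g) ≫ t) : (f ▷ B) ≫ t = (g ▷ B) ≫ t := by
  obtain ⟨s, hf, hg⟩ := IsReflexivePair.common_section f g
  have key (u : A ⟶ B) (hu : s ≫ u = 𝟙 B) : u ▷ B = (A ◁ s) ≫ (u ⊗ₘ u) := by
    rw [← id_tensorHom, tensorHom_comp_tensorHom, Category.id_comp, hu, tensorHom_id]
  rw [key f hf, key g hg, Category.assoc, Category.assoc, ht]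

lemma IsReflexivePair.whiskerLeft_comp_eq_of_tensorHom_comp_eq [IsReflexivePair f g] {Z : C}
    {t : B ⊗ B ⟶ Z} (ht : (f ⊗ₘ f) ≫ t = (g ⊗ₘ g) ≫ t) : (B ◁ f) ≫ t = (B ◁ g) ≫ t := by
  obtain ⟨s, hf, hg⟩ := IsReflexivePair.common_section f g
  have key (u : A ⟶ B) (hu : s ≫ u = 𝟙 B) : B ◁ u = (s ▷ A) ≫ (u ⊗ₘ u) := by
    rw [← tensorHom_id, tensorHom_comp_tensorHom, Category.id_comp, hu, id_tensorHom]
  rw [key f hf, key g hg, Category.assoc, Category.assoc, ht]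

variable {p : B ⟶ Q} {w : f ≫ p = g ≫ p}

noncomputable def isColimitCoforkWhiskerRight (hp : IsColimit (Cofork.ofπ p w)) (X : C)
    [PreservesColimit (parallelPair f g) (tensorRight X)] :
    IsColimit (Cofork.ofπ (p ▷ X) (by simp only [← comp_whiskerRight, w]) :
      Cofork (f ▷ X) (g ▷ X)) :=
  isColimitCoforkMapOfIsColimit (tensorRight X) w hp

noncomputable def isColimitCoforkWhiskerLeft (hp : IsColimit (Cofork.ofπ p w)) (X : C)
    [PreservesColimit (parallelPair f g) (tensorLeft X)] :
    IsColimit (Cofork.ofπ (X ◁ p) (by simp only [← whiskerLeft_comp, w]) :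
      Cofork (X ◁ f) (X ◁ g)) :=
  isColimitCoforkMapOfIsColimit (tensorLeft X) w hp

lemma epi_tensorHom_of_isColimit {A' B' Q' : C} {f' g' : A' ⟶ B'} {p' : B' ⟶ Q'}
    {w' : f' ≫ p' = g' ≫ p'} [PreservesColimit (parallelPair f g) (tensorRight B')]
    [PreservesColimit (parallelPair f' g') (tensorLeft Q)] (hp : IsColimit (Cofork.ofπ p w))
    (hp' : IsColimit (Cofork.ofπ p' w')) : Epi (p ⊗ₘ p') := by
  have : Epi (p ▷ B') := Cofork.IsColimit.epi (isColimitCoforkWhiskerRight hp B')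
  have : Epi (Q ◁ p') := Cofork.IsColimit.epi (isColimitCoforkWhiskerLeft hp' Q)
  rw [MonoidalCategory.tensorHom_def]
  exact epi_comp _ _

noncomputable def isColimitCoforkTensorHom [IsReflexivePair f g]
    [∀ X : C, PreservesColimit (parallelPair f g) (tensorLeft X)]
    [∀ X : C, PreservesColimit (parallelPair f g) (tensorRight X)]
    (hp : IsColimit (Cofork.ofπ p w)) :
    IsColimit (Cofork.ofπ (p ⊗ₘ p) (by simp only [tensorHom_comp_tensorHom, w]) :
      Cofork (f ⊗ₘ f) (g ⊗ₘ g)) := by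
  refine Cofork.IsColimit.mk' _ fun t => ?_
  have hR := isColimitCoforkWhiskerRight hp B
  have hL := isColimitCoforkWhiskerLeft hp Q
  have : Epi (p ▷ A) := Cofork.IsColimit.epi (isColimitCoforkWhiskerRight hp A)
  obtain ⟨d, hd : p ▷ B ≫ d = t.π⟩ := Cofork.IsColimit.desc' hR t.π
    (IsReflexivePair.whiskerRight_comp_eq_of_tensorHom_comp_eq t.condition)
  obtain ⟨e, he : Q ◁ p ≫ e = d⟩ := Cofork.IsColimit.desc' hL d (by
    rw [← cancel_epi (p ▷ A), ← whisker_exchange_assoc, ← whisker_exchange_assoc, hd]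
    exact IsReflexivePair.whiskerLeft_comp_eq_of_tensorHom_comp_eq t.condition)
  have he' : (p ⊗ₘ p) ≫ e = t.π := by
    rw [MonoidalCategory.tensorHom_def p p, Category.assoc, he, hd]
  refine ⟨e, he', fun hm => Cofork.IsColimit.hom_ext hL (Cofork.IsColimit.hom_ext hR ?_)⟩
  simp only [Cofork.π_ofπ, ← Category.assoc, ← MonoidalCategory.tensorHom_def, he']
  exact hm

end CategoryTheory.Limits

namespace CategoryTheory

variable {C : Type*} [Category C] [MonoidalCategory C] {M Q : C} [MonObj M]

abbrev MonObj.ofEpi (p : M ⟶ Q) (mul : Q ⊗ Q ⟶ Q) (hmul : (p ⊗ₘ p) ≫ mul = μ ≫ p)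
    [Epi (𝟙_ C ◁ p)] [Epi (p ▷ 𝟙_ C)] [Epi ((p ⊗ₘ p) ⊗ₘ p)] : MonObj Q where
  one := η ≫ p
  mul := mul
  one_mul := by
    rw [← cancel_epi (𝟙_ C ◁ p), comp_whiskerRight, Category.assoc, whisker_exchange_assoc,
      ← tensorHom_def'_assoc, hmul, one_mul_assoc, leftUnitor_naturality]
  mul_one := by
    rw [← cancel_epi (p ▷ 𝟙_ C), MonoidalCategory.whiskerLeft_comp, Category.assoc,
      ← whisker_exchange_assoc,
      ← MonoidalCategory.tensorHom_def_assoc, hmul, mul_one_assoc, rightUnitor_naturality]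
  mul_assoc := by
    rw [← cancel_epi ((p ⊗ₘ p) ⊗ₘ p), tensorHom_comp_whiskerRight_assoc, hmul, ← whiskerRight_comp_tensorHom_assoc, hmul,
      associator_naturality_assoc, tensorHom_comp_whiskerLeft_assoc, hmul,
      ← whiskerLeft_comp_tensorHom_assoc, hmul, mul_assoc_assoc]

lemma IsMonHom.of_comp {Z : C} [MonObj Q] [MonObj Z] (p : M ⟶ Q) [IsMonHom p] [Epi (p ⊗ₘ p)]
    (u : Q ⟶ Z) [IsMonHom (p ≫ u)] : IsMonHom u where
  one_hom := by rw [← IsMonHom.one_hom p, Category.assoc, IsMonHom.one_hom (p ≫ u)]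
  mul_hom := by
    rw [← cancel_epi (p ⊗ₘ p), ← IsMonHom.mul_hom_assoc, IsMonHom.mul_hom (p ≫ u),
      tensorHom_comp_tensorHom_assoc]

end CategoryTheory

namespace CategoryTheory.Mon

variable {C : Type*} [Category C] [MonoidalCategory C] {M N : Mon C} {f g : M ⟶ N}

instance isReflexivePair_hom [IsReflexivePair f g] : IsReflexivePair f.hom g.hom := by
  obtain ⟨s, hf, hg⟩ := IsReflexivePair.common_section f g
  exact .mk' s.hom (congrArg Hom.hom hf) (congrArg Hom.hom hg)

variable [∀ X : C, PreservesColimitsOfShape WalkingParallelPair (tensorLeft X)]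
  [∀ X : C, PreservesColimitsOfShape WalkingParallelPair (tensorRight X)] [IsReflexivePair f g]
  {Q : C} {p : N.X ⟶ Q} {w : f.hom ≫ p = g.hom ≫ p}

noncomputable def mulOfIsColimitCofork (hp : IsColimit (Cofork.ofπ p w)) : Q ⊗ Q ⟶ Q :=
  Cofork.IsColimit.desc (isColimitCoforkTensorHom hp) (μ ≫ p) (by
    simp only [← IsMonHom.mul_hom_assoc, w])

lemma tensorHom_comp_mulOfIsColimitCofork (hp : IsColimit (Cofork.ofπ p w)) :
    (p ⊗ₘ p) ≫ mulOfIsColimitCofork hp = μ ≫ p :=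
  Cofork.IsColimit.π_desc (isColimitCoforkTensorHom hp)

noncomputable def ofIsColimitCofork (hp : IsColimit (Cofork.ofπ p w)) : Mon C :=
  have : Epi (𝟙_ C ◁ p) := Cofork.IsColimit.epi (isColimitCoforkWhiskerLeft hp _)
  have : Epi (p ▷ 𝟙_ C) := Cofork.IsColimit.epi (isColimitCoforkWhiskerRight hp _)
  have := epi_tensorHom_of_isColimit (isColimitCoforkTensorHom hp) hp
  { X := Q, mon := .ofEpi p (mulOfIsColimitCofork hp) (tensorHom_comp_mulOfIsColimitCofork hp) }

noncomputable def homOfIsColimitCofork (hp : IsColimit (Cofork.ofπ p w)) :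
    N ⟶ ofIsColimitCofork hp :=
  .mk' p (by rfl) (by exact (tensorHom_comp_mulOfIsColimitCofork hp).symm)

noncomputable def isColimitCoforkOfIsColimit (hp : IsColimit (Cofork.ofπ p w)) :
    IsColimit (Cofork.ofπ (homOfIsColimitCofork hp) (Hom.ext w) : Cofork f g) := by
  have : Epi ((homOfIsColimitCofork hp).hom ⊗ₘ (homOfIsColimitCofork hp).hom) :=
    epi_tensorHom_of_isColimit hp hp
  refine Cofork.IsColimit.mk' _ fun t => ?_
  obtain ⟨u, hu⟩ := Cofork.IsColimit.desc' hp t.π.hom (congrArg Hom.hom t.condition)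
  have : IsMonHom ((homOfIsColimitCofork hp).hom ≫ u) := by
    simp only [Cofork.π_ofπ] at hu; exact hu ▸ inferInstance
  have := IsMonHom.of_comp (homOfIsColimitCofork hp).hom u
  refine ⟨.mk u, Hom.ext hu, fun hm => Hom.ext (Cofork.IsColimit.hom_ext hp ?_)⟩
  exact (congrArg Hom.hom hm).trans hu.symm

instance preservesColimit_parallelPair_forget [HasCoequalizer f.hom g.hom] :
    PreservesColimit (parallelPair f g) (forget C) :=
  preservesColimit_of_preserves_colimit_cocone
    (isColimitCoforkOfIsColimit (coequalizerIsCoequalizer f.hom g.hom))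
    ((isColimitMapCoconeCoforkEquiv _ _).symm (coequalizerIsCoequalizer f.hom g.hom))

end CategoryTheory.Mon

theorem monForget_preserves_reflexive_coequalizers_general
    (C : Type*) [Category C] [MonoidalCategory C] [SymmetricCategory C]
    [MonoidalClosed C] [HasCoequalizers C]
    {M N : Mon C} (f g : M ⟶ N) (s : N ⟶ M)
    (hf : s ≫ f = 𝟙 N) (hg : s ≫ g = 𝟙 N)
    (c : Cofork f g) (hc : IsColimit c) :
    Nonempty (IsColimit ((Mon.forget C).mapCocone c)) :=
  have := IsReflexivePair.mk' s hf hg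
  ⟨isColimitOfPreserves (Mon.forget C) hc⟩

/-- for a symmetric monoidal closed category `C` with all coequalizers and
countable coproducts, the forgetful functor `Mon_ C ⥤ C` preserves reflexive
coequalizers: if `f, g : M ⟶ N` in `Mon_ C` admit a common section `s` and
`c` is a colimiting cofork (coequalizer) of `f` and `g` in `Mon_ C`, then the image of
`c` under the forgetful functor is a colimiting cofork in `C`. -/
theorem monForget_preserves_reflexive_coequalizers
    (C : Type*) [Category C] [MonoidalCategory C] [SymmetricCategory C]
    [MonoidalClosed C] [HasCoequalizers C] [HasCountableCoproducts C]
    {M N : Mon C} (f g : M ⟶ N) (s : N ⟶ M)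
    (hf : s ≫ f = 𝟙 N) (hg : s ≫ g = 𝟙 N)
    (c : Cofork f g) (hc : IsColimit c) :
    Nonempty (IsColimit ((Mon.forget C).mapCocone c)) :=
  monForget_preserves_reflexive_coequalizers_general C f g s hf hg c hc
end
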